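/- Let K, L ≥ 3 be odd and consider the discrete torus T_{KL} = (Z/KZ) × (Z/LZ) with graph (L1) distance. For an ordered pair (u,v) with dist(u,v)>1, let W(u,v) be the set of neighbors w of u with dist(w,v)=dist(u,v)-1 (so |W(u,v)| ∈ {1,2}), and let T(u,v) be uniform on W(u,v). Fix j ∈ V_{KL} and let D: V_{KL} → V_{KL} be an arbitrary map. Then (1/(KL)!) Σ_{π ∈ S_{KL}} Σ_{i ∈ V_{KL}} P( dist(π(i),D(i))>1 and T(π(i),D(i)) = π(j) ) = (KL-5)/(KL). -/
import Mathlib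


/-- Graph distance on the cycle with vertices `Z/KZ`. -/
def cycleDist (K : ℕ) [NeZero K] (u v : ZMod K) : ℕ :=
  min (u - v).val (v - u).val

/-- Graph (L1) distance on the discrete torus `(Z/KZ) × (Z/LZ)`. -/
def torusDist (K L : ℕ) [NeZero K] [NeZero L] (u v : ZMod K × ZMod L) : ℕ :=
  cycleDist K u.1 v.1 + cycleDist L u.2 v.2

/-- The set of next hops from `u` toward `v` on the torus: neighbors of `u`
strictly closer to `v`. -/
def torusNextHops (K L : ℕ) [NeZero K] [NeZero L] (u v : ZMod K × ZMod L) :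
    Finset (ZMod K × ZMod L) :=
  Finset.univ.filter (fun w =>
    torusDist K L u w = 1 ∧ torusDist K L w v = torusDist K L u v - 1)


set_option linter.unusedSectionVars false
set_option linter.unusedVariables false

section Cycle
variable {K : ℕ} [NeZero K]

lemma cycleDist_self (a : ZMod K) : cycleDist K a a = 0 := by
  simp [cycleDist]

lemma cycleDist_eq_zero {a b : ZMod K} : cycleDist K a b = 0 ↔ a = b := by
  rw [cycleDist, Nat.min_eq_zero_iff, ZMod.val_eq_zero, ZMod.val_eq_zero,
    sub_eq_zero, sub_eq_zero]
  constructor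
  · rintro (h | h) <;> simp [h]
  · rintro rfl; simp

lemma val_one' (hK : 3 ≤ K) : (1 : ZMod K).val = 1 := by
  haveI : Fact (1 < K) := ⟨by omega⟩
  exact ZMod.val_one K

lemma val_neg_one (hK : 3 ≤ K) : (-1 : ZMod K).val = K - 1 := by
  rw [ZMod.neg_val]
  have h1 : (1 : ZMod K) ≠ 0 := by
    intro h
    have := val_one' hK
    rw [h, ZMod.val_zero] at this
    omega
  rw [if_neg h1, val_one' hK]

lemma val_sub_one {x : ZMod K} (hK : 3 ≤ K) (hx : x ≠ 0) : (x - 1).val = x.val - 1 := by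
  have h1 : (1 : ZMod K).val = 1 := val_one' hK
  have hx' : x.val ≠ 0 := fun h => hx (ZMod.val_eq_zero x |>.mp h)
  exact (ZMod.val_sub (by omega)).trans (by omega)

lemma val_add_one {x : ZMod K} (hK : 3 ≤ K) (hx : x.val + 1 < K) : (x + 1).val = x.val + 1 := by
  rw [ZMod.val_add, val_one' hK, Nat.mod_eq_of_lt hx]

lemma val_add_val {a b : ZMod K} (h : a ≠ b) : (a - b).val + (b - a).val = K := by
  have h1 : a - b ≠ 0 := sub_ne_zero.mpr h
  have h2 : b - a = -(a - b) := by ring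
  have h3 : (a - b).val ≠ 0 := fun hh => h1 ((ZMod.val_eq_zero _).mp hh)
  have h4 := ZMod.val_lt (a - b)
  rw [h2, ZMod.neg_val, if_neg h1]
  omega

lemma cycleDist_eq_one_iff (hK : 3 ≤ K) {a b : ZMod K} :
    cycleDist K a b = 1 ↔ b = a - 1 ∨ b = a + 1 := by
  have hval : ∀ x : ZMod K, x.val = 1 ↔ x = 1 := by
    intro x
    constructor
    · intro h; exact ZMod.val_injective K (h.trans (val_one' hK).symm)
    · rintro rfl; exact val_one' hK
  rw [cycleDist]
  constructor
  · intro h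
    have h' : (a - b).val = 1 ∨ (b - a).val = 1 := by omega
    rcases h' with h' | h'
    · have h2 : a - b = 1 := (hval _).mp h'
      left; linear_combination -h2
    · have h2 : b - a = 1 := (hval _).mp h'
      right; linear_combination h2
  · have hm1 : (-1 : ZMod K).val = K - 1 := val_neg_one hK
    rintro (rfl | rfl)
    · have e1 : a - (a - 1) = 1 := by ring
      have e2 : a - 1 - a = -1 := by ring
      rw [e1, e2, val_one' hK, hm1]
      omega
    · have e1 : a - (a + 1) = -1 := by ring
      have e2 : a + 1 - a = 1 := by ring
      rw [e1, e2, val_one' hK, hm1]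
      omega

lemma cycleDist_step (hK : 3 ≤ K) {a b : ZMod K} (h : 0 < cycleDist K a b) :
    ∃ c : ZMod K, cycleDist K a c = 1 ∧ cycleDist K c b = cycleDist K a b - 1 := by
  have hab : a ≠ b := fun he => by simp [he, cycleDist_self] at h
  have hsum : (a - b).val + (b - a).val = K := val_add_val hab
  have hm0 : a - b ≠ 0 := sub_ne_zero.mpr hab
  have hn0 : b - a ≠ 0 := sub_ne_zero.mpr (Ne.symm hab)
  have hmv : (a - b).val ≠ 0 := fun hh => hm0 ((ZMod.val_eq_zero _).mp hh)
  have hnv : (b - a).val ≠ 0 := fun hh => hn0 ((ZMod.val_eq_zero _).mp hh)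
  have hm1 : (-1 : ZMod K).val = K - 1 := val_neg_one hK
  rw [cycleDist] at h ⊢
  rcases le_or_gt (a - b).val (b - a).val with hc | hc
  · refine ⟨a - 1, ?_, ?_⟩
    · have e1 : a - (a - 1) = 1 := by ring
      have e2 : a - 1 - a = -1 := by ring
      rw [cycleDist, e1, e2, val_one' hK, hm1]; omega
    · have e1 : a - 1 - b = (a - b) - 1 := by ring
      have e2 : b - (a - 1) = (b - a) + 1 := by ring
      rw [cycleDist, e1, e2, val_sub_one hK hm0]
      by_cases hone : (a - b).val = 1
      · have : a - b = 1 := ZMod.val_injective K (hone.trans (val_one' hK).symm)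
        have hba : b - a + 1 = 0 := by linear_combination -this
        rw [hba, ZMod.val_zero]
        omega
      · rw [val_add_one hK (by omega)]
        omega
  · refine ⟨a + 1, ?_, ?_⟩
    · have e1 : a - (a + 1) = -1 := by ring
      have e2 : a + 1 - a = 1 := by ring
      rw [cycleDist, e1, e2, val_one' hK, hm1]; omega
    · have e1 : a + 1 - b = (a - b) + 1 := by ring
      have e2 : b - (a + 1) = (b - a) - 1 := by ring
      rw [cycleDist, e1, e2, val_sub_one hK hn0]
      by_cases hone : (b - a).val = 1
      · have : b - a = 1 := ZMod.val_injective K (hone.trans (val_one' hK).symm)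
        have hba : b - a - 1 = 0 := by linear_combination this
        have hab1 : a - b + 1 = 0 := by linear_combination -this
        rw [hab1, ZMod.val_zero]
        omega
      · rw [val_add_one hK (by omega)]
        omega

end Cycle

section Torus
variable {K L : ℕ} [NeZero K] [NeZero L]

lemma torusDist_self (u : ZMod K × ZMod L) : torusDist K L u u = 0 := by
  simp [torusDist, cycleDist_self]

lemma torusDist_eq_zero {u v : ZMod K × ZMod L} : torusDist K L u v = 0 ↔ u = v := by
  rw [torusDist, Nat.add_eq_zero, cycleDist_eq_zero, cycleDist_eq_zero, Prod.ext_iff]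

lemma nextHops_nonempty (hK : 3 ≤ K) (hL : 3 ≤ L) {u v : ZMod K × ZMod L}
    (h : 0 < torusDist K L u v) : (torusNextHops K L u v).Nonempty := by
  rw [torusDist] at h
  rcases (by omega : 0 < cycleDist K u.1 v.1 ∨ 0 < cycleDist L u.2 v.2) with h1 | h2
  · obtain ⟨c, hc1, hc2⟩ := cycleDist_step hK h1
    refine ⟨(c, u.2), ?_⟩
    rw [torusNextHops, Finset.mem_filter]
    refine ⟨Finset.mem_univ _, ?_, ?_⟩
    · show cycleDist K u.1 c + cycleDist L u.2 u.2 = 1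
      rw [hc1, cycleDist_self]
    · show cycleDist K c v.1 + cycleDist L u.2 v.2 =
        (cycleDist K u.1 v.1 + cycleDist L u.2 v.2) - 1
      omega
  · obtain ⟨c, hc1, hc2⟩ := cycleDist_step hL h2
    refine ⟨(u.1, c), ?_⟩
    rw [torusNextHops, Finset.mem_filter]
    refine ⟨Finset.mem_univ _, ?_, ?_⟩
    · show cycleDist K u.1 u.1 + cycleDist L u.2 c = 1
      rw [hc1, cycleDist_self]
    · show cycleDist K u.1 v.1 + cycleDist L c v.2 =
        (cycleDist K u.1 v.1 + cycleDist L u.2 v.2) - 1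
      omega

lemma one_ne_zero'' (hK : 3 ≤ K) : (1 : ZMod K) ≠ 0 := by
  intro h
  have := val_one' hK
  rw [h, ZMod.val_zero] at this
  omega

lemma two_ne_zero'' (hK : 3 ≤ K) : (2 : ZMod K) ≠ 0 := by
  intro h
  have h2 : ((2 : ℕ) : ZMod K) = 2 := by norm_cast
  have := ZMod.val_cast_of_lt (show 2 < K by omega)
  rw [h2, h, ZMod.val_zero] at this
  omega

lemma torusDist_le_one_iff (hK : 3 ≤ K) (hL : 3 ≤ L) {u v : ZMod K × ZMod L} :
    torusDist K L u v ≤ 1 ↔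
      u = v ∨ u = (v.1 + 1, v.2) ∨ u = (v.1 - 1, v.2) ∨
        u = (v.1, v.2 + 1) ∨ u = (v.1, v.2 - 1) := by
  rw [torusDist]
  constructor
  · intro h
    rcases (by omega : (cycleDist K u.1 v.1 = 0 ∧ cycleDist L u.2 v.2 = 0) ∨
        (cycleDist K u.1 v.1 = 1 ∧ cycleDist L u.2 v.2 = 0) ∨
        (cycleDist K u.1 v.1 = 0 ∧ cycleDist L u.2 v.2 = 1)) with ⟨h1, h2⟩ | ⟨h1, h2⟩ | ⟨h1, h2⟩
    · left
      exact Prod.ext (cycleDist_eq_zero.mp h1) (cycleDist_eq_zero.mp h2)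
    · have h2' := cycleDist_eq_zero.mp h2
      rcases (cycleDist_eq_one_iff hK).mp h1 with h1' | h1'
      · right; left
        refine Prod.ext ?_ h2'
        show u.1 = v.1 + 1
        linear_combination -h1'
      · right; right; left
        refine Prod.ext ?_ h2'
        show u.1 = v.1 - 1
        linear_combination -h1'
    · have h1' := cycleDist_eq_zero.mp h1
      rcases (cycleDist_eq_one_iff hL).mp h2 with h2' | h2'
      · right; right; right; left
        refine Prod.ext h1' ?_
        show u.2 = v.2 + 1
        linear_combination -h2'
      · right; right; right; right
        refine Prod.ext h1' ?_
        show u.2 = v.2 - 1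
        linear_combination -h2'
  · have hK1 : (-1 : ZMod K).val = K - 1 := val_neg_one hK
    have hL1 : (-1 : ZMod L).val = L - 1 := val_neg_one hL
    rintro (rfl | rfl | rfl | rfl | rfl)
    · simp [cycleDist_self]
    · rw [show cycleDist L (v.1+1, v.2).2 v.2 = 0 from cycleDist_self _]
      rw [show cycleDist K (v.1+1, v.2).1 v.1 = min ((v.1+1) - v.1).val (v.1 - (v.1+1)).val from rfl]
      rw [show (v.1+1) - v.1 = 1 by ring, show v.1 - (v.1+1) = -1 by ring, val_one' hK, hK1]
      omega
    · rw [show cycleDist L (v.1-1, v.2).2 v.2 = 0 from cycleDist_self _]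
      rw [show cycleDist K (v.1-1, v.2).1 v.1 = min ((v.1-1) - v.1).val (v.1 - (v.1-1)).val from rfl]
      rw [show (v.1-1) - v.1 = -1 by ring, show v.1 - (v.1-1) = 1 by ring, val_one' hK, hK1]
      omega
    · rw [show cycleDist K (v.1, v.2+1).1 v.1 = 0 from cycleDist_self _]
      rw [show cycleDist L (v.1, v.2+1).2 v.2 = min ((v.2+1) - v.2).val (v.2 - (v.2+1)).val from rfl]
      rw [show (v.2+1) - v.2 = 1 by ring, show v.2 - (v.2+1) = -1 by ring, val_one' hL, hL1]
      omega
    · rw [show cycleDist K (v.1, v.2-1).1 v.1 = 0 from cycleDist_self _]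
      rw [show cycleDist L (v.1, v.2-1).2 v.2 = min ((v.2-1) - v.2).val (v.2 - (v.2-1)).val from rfl]
      rw [show (v.2-1) - v.2 = -1 by ring, show v.2 - (v.2-1) = 1 by ring, val_one' hL, hL1]
      omega

lemma card_far (hK : 3 ≤ K) (hL : 3 ≤ L) (v : ZMod K × ZMod L) :
    (Finset.univ.filter (fun u => 1 < torusDist K L u v)).card = K * L - 5 := by
  classical
  have a1 : v.1 + 1 ≠ v.1 - 1 := fun h => two_ne_zero'' hK (by linear_combination h)
  have a2 : v.1 ≠ v.1 + 1 := fun h => one_ne_zero'' hK (by linear_combination -h)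
  have a3 : v.1 ≠ v.1 - 1 := fun h => one_ne_zero'' hK (by linear_combination h)
  have b1 : v.2 + 1 ≠ v.2 - 1 := fun h => two_ne_zero'' hL (by linear_combination h)
  have b2 : v.2 ≠ v.2 + 1 := fun h => one_ne_zero'' hL (by linear_combination -h)
  have b3 : v.2 ≠ v.2 - 1 := fun h => one_ne_zero'' hL (by linear_combination h)
  have hball : (Finset.univ.filter (fun u => ¬ 1 < torusDist K L u v)) =
      ({v, (v.1 + 1, v.2), (v.1 - 1, v.2), (v.1, v.2 + 1), (v.1, v.2 - 1)} :
        Finset (ZMod K × ZMod L)) := by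
    ext u
    simp only [Finset.mem_filter, Finset.mem_univ, true_and, not_lt,
      Finset.mem_insert, Finset.mem_singleton]
    exact torusDist_le_one_iff hK hL
  have hcard5 : ({v, (v.1 + 1, v.2), (v.1 - 1, v.2), (v.1, v.2 + 1), (v.1, v.2 - 1)} :
      Finset (ZMod K × ZMod L)).card = 5 := by
    rw [Finset.card_insert_of_notMem (by
      simp only [Finset.mem_insert, Finset.mem_singleton, Prod.ext_iff, not_or]
      exact ⟨fun h => a2 h.1, fun h => a3 h.1, fun h => b2 h.2, fun h => b3 h.2⟩)]
    rw [Finset.card_insert_of_notMem (by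
      simp only [Finset.mem_insert, Finset.mem_singleton, Prod.ext_iff, not_or]
      exact ⟨fun h => a1 h.1, fun h => a2.symm h.1, fun h => a2.symm h.1⟩)]
    rw [Finset.card_insert_of_notMem (by
      simp only [Finset.mem_insert, Finset.mem_singleton, Prod.ext_iff, not_or]
      exact ⟨fun h => a3.symm h.1, fun h => a3.symm h.1⟩)]
    rw [Finset.card_insert_of_notMem (by
      simp only [Finset.mem_singleton, Prod.ext_iff, not_and]
      exact fun _ h => b1 h)]
    rfl
  have htot := Finset.card_filter_add_card_filter_not
    (s := (Finset.univ : Finset (ZMod K × ZMod L))) (p := fun u => 1 < torusDist K L u v)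
  rw [hball, hcard5] at htot
  have hcu : (Finset.univ : Finset (ZMod K × ZMod L)).card = K * L := by
    simp [Finset.card_univ, ZMod.card]
  omega

lemma inner_double_sum (hK : 3 ≤ K) (hL : 3 ≤ L) (v : ZMod K × ZMod L) :
    ∑ u : ZMod K × ZMod L, ∑ w : ZMod K × ZMod L,
      (if 1 < torusDist K L u v ∧ w ∈ torusNextHops K L u v
        then (1 : ℚ) / ((torusNextHops K L u v).card : ℚ) else 0)
      = (K : ℚ) * (L : ℚ) - 5 := by
  classical
  have hrow : ∀ u : ZMod K × ZMod L,
      ∑ w : ZMod K × ZMod L,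
        (if 1 < torusDist K L u v ∧ w ∈ torusNextHops K L u v
          then (1 : ℚ) / ((torusNextHops K L u v).card : ℚ) else 0)
      = if 1 < torusDist K L u v then (1 : ℚ) else 0 := by
    intro u
    by_cases h : 1 < torusDist K L u v
    · simp only [h, true_and, if_true]
      have hne : (torusNextHops K L u v).Nonempty := nextHops_nonempty hK hL (by omega)
      have hc : ((torusNextHops K L u v).card : ℚ) ≠ 0 := by
        have := Finset.card_pos.mpr hne
        exact_mod_cast this.ne'
      rw [Finset.sum_ite_mem, Finset.univ_inter, Finset.sum_const, nsmul_eq_mul]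
      field_simp
    · simp [h]
  rw [Finset.sum_congr rfl (fun u _ => hrow u), Finset.sum_boole]
  rw [card_far hK hL v]
  have : (9 : ℕ) ≤ K * L := Nat.mul_le_mul hK hL
  push_cast [Nat.cast_sub (by omega : 5 ≤ K * L)]
  ring

end Torus

section PermSum
open Finset
variable {α : Type*} [Fintype α] [DecidableEq α]

def Fcount (i j u w : α) : ℚ :=
  ∑ π : Equiv.Perm α, (if π i = u ∧ π j = w then (1 : ℚ) else 0)

lemma Fcount_eq (i j : α) {u w u' w' : α} (huw : u ≠ w) (huw' : u' ≠ w') :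
    Fcount i j u w = Fcount i j u' w' := by
  set σ1 := Equiv.swap u u' with hσ1
  set σ2 := Equiv.swap (σ1 w) w' with hσ2
  set σ0 := σ1.trans σ2 with hσ0
  have h0u : σ0 u = u' := by
    show σ2 (σ1 u) = u'
    rw [hσ1, Equiv.swap_apply_left]
    apply Equiv.swap_apply_of_ne_of_ne
    · intro h
      exact huw (σ1.injective ((Equiv.swap_apply_left u u').trans h))
    · exact huw'
  have h0w : σ0 w = w' := by
    show σ2 (σ1 w) = w'
    rw [hσ2, Equiv.swap_apply_left]
  unfold Fcount
  refine Fintype.sum_equiv (Equiv.mulLeft (σ0 : Equiv.Perm α)) _ _ ?_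
  intro ρ
  have hmul : ∀ x, (Equiv.mulLeft (σ0 : Equiv.Perm α) ρ) x = σ0 (ρ x) := fun x => rfl
  rw [hmul, hmul, ← h0u, ← h0w]
  simp only [Equiv.apply_eq_iff_eq]

lemma master_perm_sum (g : α → α → ℚ) (hg : ∀ u, g u u = 0) (i j : α) (hij : i ≠ j) :
    ∑ π : Equiv.Perm α, g (π i) (π j) = Fcount i j i j * ∑ u, ∑ w, g u w := by
  have step1 : ∑ π : Equiv.Perm α, g (π i) (π j)
      = ∑ u, ∑ w, Fcount i j u w * g u w := by
    have hπ : ∀ π : Equiv.Perm α,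
        g (π i) (π j) = ∑ u, ∑ w, (if π i = u ∧ π j = w then g u w else 0) := by
      intro π
      simp [ite_and, Finset.sum_ite_eq]
    rw [Finset.sum_congr rfl (fun π _ => hπ π)]
    rw [Finset.sum_comm]
    refine Finset.sum_congr rfl fun u _ => ?_
    rw [Finset.sum_comm]
    refine Finset.sum_congr rfl fun w _ => ?_
    rw [Fcount, Finset.sum_mul]
    refine Finset.sum_congr rfl fun π _ => ?_
    split_ifs <;> simp
  rw [step1]
  rw [Finset.mul_sum]
  refine Finset.sum_congr rfl fun u _ => ?_
  rw [Finset.mul_sum]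
  refine Finset.sum_congr rfl fun w _ => ?_
  by_cases huw : u = w
  · subst huw; rw [hg]; ring
  · rw [Fcount_eq i j huw hij]

lemma Fcount_mul (i j : α) (hij : i ≠ j) :
    Fcount i j i j * ((Fintype.card α : ℚ) * ((Fintype.card α : ℚ) - 1))
      = (Nat.factorial (Fintype.card α) : ℚ) := by
  have hm := master_perm_sum (fun u w => if u = w then 0 else 1)
    (fun u => by simp) i j hij
  have hL : ∑ π : Equiv.Perm α, (if π i = π j then (0:ℚ) else 1)
      = (Nat.factorial (Fintype.card α) : ℚ) := by
    have h1 : ∀ π : Equiv.Perm α, (if π i = π j then (0:ℚ) else 1) = 1 :=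
      fun π => if_neg (fun h => hij (π.injective h))
    rw [Finset.sum_congr rfl (fun π _ => h1 π), Finset.sum_const, Finset.card_univ,
      Fintype.card_perm, nsmul_eq_mul, mul_one]
  have hR : ∑ u : α, ∑ w : α, (if u = w then (0:ℚ) else 1)
      = (Fintype.card α : ℚ) * ((Fintype.card α : ℚ) - 1) := by
    have h2 : ∀ u : α, ∑ w : α, (if u = w then (0:ℚ) else 1)
        = (Fintype.card α : ℚ) - 1 := by
      intro u
      have h1 : ∑ w : α, (if u = w then (0:ℚ) else 1)
          = ∑ w : α, ((1:ℚ) - if u = w then 1 else 0) := by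
        refine Finset.sum_congr rfl fun w _ => by split_ifs <;> ring
      rw [h1, Finset.sum_sub_distrib, Finset.sum_const, Finset.card_univ,
        Finset.sum_ite_eq, if_pos (Finset.mem_univ u), nsmul_eq_mul, mul_one]
    rw [Finset.sum_congr rfl (fun u _ => h2 u), Finset.sum_const, Finset.card_univ,
      nsmul_eq_mul]
  rw [hL, hR] at hm
  linarith

end PermSum

/-- Lemma (torus): for odd `K, L ≥ 3`, a fixed `j` and an arbitrary destination
map `D`, the average over uniform permutations of the total probability that
the random next hop from `π(i)` toward `D(i)` (uniform on the set of closer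
neighbors) is `π(j)` equals `(KL-5)/(KL)`. -/
theorem torus_transit_rate (K L : ℕ) [NeZero K] [NeZero L]
    (hK : 3 ≤ K) (hL : 3 ≤ L) (hoddK : Odd K) (hoddL : Odd L)
    (j : ZMod K × ZMod L) (D : ZMod K × ZMod L → ZMod K × ZMod L) :
    (∑ π : Equiv.Perm (ZMod K × ZMod L), ∑ i : ZMod K × ZMod L,
      (if 1 < torusDist K L (π i) (D i) ∧ π j ∈ torusNextHops K L (π i) (D i)
        then (1 : ℚ) / ((torusNextHops K L (π i) (D i)).card : ℚ) else 0)) /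
      (Nat.factorial (K * L) : ℚ) =
    ((K : ℚ) * (L : ℚ) - 5) / ((K : ℚ) * (L : ℚ)) := by
  classical
  have hcard : Fintype.card (ZMod K × ZMod L) = K * L := by simp [ZMod.card]
  have hN9 : 9 ≤ K * L := by
    calc 9 = 3 * 3 := rfl
    _ ≤ K * L := Nat.mul_le_mul hK hL
  have hKL : ((K * L : ℕ) : ℚ) = (K : ℚ) * (L : ℚ) := by push_cast; ring
  have hKLne : ((K : ℚ) * (L : ℚ)) ≠ 0 := by
    rw [← hKL]
    exact_mod_cast (by omega : (K * L : ℕ) ≠ 0)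
  have hKL1ne : ((K : ℚ) * (L : ℚ) - 1) ≠ 0 := by
    rw [← hKL]
    intro h
    have : ((K * L : ℕ) : ℚ) = 1 := by linarith
    have : (K * L : ℕ) = 1 := by exact_mod_cast this
    omega
  have hfacne : (Nat.factorial (K * L) : ℚ) ≠ 0 := by
    exact_mod_cast (Nat.factorial_pos (K * L)).ne'
  -- compute Fcount on distinct pairs
  have hF : ∀ i : ZMod K × ZMod L, i ≠ j → Fcount i j i j
      = (Nat.factorial (K * L) : ℚ) / ((K : ℚ) * (L : ℚ) * ((K : ℚ) * (L : ℚ) - 1)) := by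
    intro i hij
    have h := Fcount_mul i j hij
    rw [hcard, hKL] at h
    rw [eq_div_iff (mul_ne_zero hKLne hKL1ne)]
    exact h
  -- per-i sums
  have hmain : ∀ i : ZMod K × ZMod L, i ≠ j →
      ∑ π : Equiv.Perm (ZMod K × ZMod L),
        (if 1 < torusDist K L (π i) (D i) ∧ π j ∈ torusNextHops K L (π i) (D i)
          then (1 : ℚ) / ((torusNextHops K L (π i) (D i)).card : ℚ) else 0)
      = (Nat.factorial (K * L) : ℚ) / ((K : ℚ) * (L : ℚ) * ((K : ℚ) * (L : ℚ) - 1))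
        * ((K : ℚ) * (L : ℚ) - 5) := by
    intro i hij
    have hm := master_perm_sum
      (fun u w => if 1 < torusDist K L u (D i) ∧ w ∈ torusNextHops K L u (D i)
        then (1 : ℚ) / ((torusNextHops K L u (D i)).card : ℚ) else 0)
      (fun u => by
        show (if 1 < torusDist K L u (D i) ∧ u ∈ torusNextHops K L u (D i)
          then (1 : ℚ) / ((torusNextHops K L u (D i)).card : ℚ) else 0) = 0
        rw [if_neg]
        rintro ⟨-, hmem⟩
        rw [torusNextHops, Finset.mem_filter] at hmem
        have h1 := hmem.2.1
        rw [torusDist_self] at h1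
        exact absurd h1 (by omega))
      i j hij
    rw [hm, inner_double_sum hK hL (D i), hF i hij]
  have hjzero :
      ∑ π : Equiv.Perm (ZMod K × ZMod L),
        (if 1 < torusDist K L (π j) (D j) ∧ π j ∈ torusNextHops K L (π j) (D j)
          then (1 : ℚ) / ((torusNextHops K L (π j) (D j)).card : ℚ) else 0) = 0 := by
    refine Finset.sum_eq_zero fun π _ => ?_
    rw [if_neg]
    rintro ⟨-, hmem⟩
    rw [torusNextHops, Finset.mem_filter] at hmem
    have h1 := hmem.2.1
    rw [torusDist_self] at h1
    exact absurd h1 (by omega)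
  rw [Finset.sum_comm]
  set C : ℚ := (Nat.factorial (K * L) : ℚ) / ((K : ℚ) * (L : ℚ) * ((K : ℚ) * (L : ℚ) - 1))
    * ((K : ℚ) * (L : ℚ) - 5) with hC
  have hsum : ∑ i : ZMod K × ZMod L,
      (∑ π : Equiv.Perm (ZMod K × ZMod L),
        (if 1 < torusDist K L (π i) (D i) ∧ π j ∈ torusNextHops K L (π i) (D i)
          then (1 : ℚ) / ((torusNextHops K L (π i) (D i)).card : ℚ) else 0))
      = ∑ i : ZMod K × ZMod L, (if i = j then 0 else C) := by
    refine Finset.sum_congr rfl fun i _ => ?_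
    by_cases hij : i = j
    · rw [if_pos hij]; subst hij; exact hjzero
    · rw [if_neg hij]; exact hmain i hij
  rw [hsum]
  have hsum2 : ∑ i : ZMod K × ZMod L, (if i = j then (0:ℚ) else C)
      = ((K : ℚ) * (L : ℚ) - 1) * C := by
    have h1 : ∀ i : ZMod K × ZMod L, (if i = j then (0:ℚ) else C)
        = C - (if i = j then C else 0) := by
      intro i; split_ifs <;> ring
    rw [Finset.sum_congr rfl (fun i _ => h1 i), Finset.sum_sub_distrib,
      Finset.sum_const, Finset.card_univ, hcard,
      Finset.sum_ite_eq', if_pos (Finset.mem_univ j), nsmul_eq_mul, hKL]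
    ring
  rw [hsum2, hC]
  field_simp
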